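/- The Taylor expansion at t = 0 of the function t ↦ Ω⋆(t² − 2) + t² − 2 begins (4/(3π))t³ + (1/(30π))t⁵ + (3/(1120π))t⁷ + O(t⁹). -/

import Mathlib

/-!
Write `y = t² - 2` and `θ = arcsin (t / 2)`. For `0 ≤ t ≤ 2` we have `√(4 - y²) = t √(4 - t²)` and
`arcsin (y / 2) = 2θ - π / 2`, so the function equals `(2 / π) g t` with
`g t = t √(4 - t²) + 2 (t² - 2) arcsin (t / 2)`, whose derivative collapses to `4 t arcsin (t / 2)`.
The expansion therefore comes from integrating Taylor remainders twice: `1 / √(1 - u²)` is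
`1 + u² / 2 + 3 u⁴ / 8 + O(u⁶)`, hence `arcsin u = u + u³ / 6 + 3 u⁵ / 40 + O(u⁷)`, hence the
expansion of `g` up to `O(t⁹)`.
-/

open Real Set Filter Asymptotics Topology

noncomputable def OmegaLSVK (y : ℝ) : ℝ :=
  (2 / π) * (Real.sqrt (4 - y ^ 2) + y * Real.arcsin (y / 2))

theorem isBigO_pow_succ_of_hasDerivAt {E : Type*} [NormedAddCommGroup E] [NormedSpace ℝ E]
    {f f' : ℝ → E} {n : ℕ} (hf0 : f 0 = 0) (hf : ∀ᶠ x in 𝓝 0, HasDerivAt f (f' x) x)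
    (hf' : f' =O[𝓝 0] (· ^ n)) : f =O[𝓝 0] (· ^ (n + 1)) := by
  obtain ⟨C, hC₀, hC⟩ := hf'.exists_nonneg
  obtain ⟨δ, hδ, hball⟩ := Metric.eventually_nhds_iff_ball.mp (hf.and hC.bound)
  refine IsBigO.of_bound C ?_
  filter_upwards [Metric.ball_mem_nhds 0 hδ] with t ht
  have hsub : uIcc 0 t ⊆ Metric.ball 0 δ :=
    (convex_ball (0 : ℝ) δ).ordConnected.uIcc_subset (Metric.mem_ball_self hδ) ht
  have hbound (x : ℝ) (hx : x ∈ uIcc 0 t) : ‖f' x‖ ≤ C * |t| ^ n := by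
    have hxt : |x| ≤ |t| := by simpa using abs_sub_left_of_mem_uIcc hx
    calc ‖f' x‖ ≤ C * |x| ^ n := by simpa using (hball x (hsub hx)).2
      _ ≤ C * |t| ^ n := by gcongr
  have hmvt := (convex_uIcc (0 : ℝ) t).norm_image_sub_le_of_norm_hasDerivWithin_le
    (fun x hx => (hball x (hsub hx)).1.hasDerivWithinAt) hbound left_mem_uIcc right_mem_uIcc
  simpa [hf0, pow_succ, mul_assoc] using hmvt

/-- With `s = √(1 - x²)` and `q` the Taylor polynomial, `1 / s - q = (1 - s² q²) / (s (1 + s q))`,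
and `1 - (1 - x²) q²` is divisible by `x⁶`. -/
theorem one_div_sqrt_one_sub_sq_sub_taylor_eq {x : ℝ} (hx : x ^ 2 < 1) :
    1 / √(1 - x ^ 2) - (1 + x ^ 2 / 2 + 3 * x ^ 4 / 8) =
      x ^ 6 * ((5 / 8 + 15 * x ^ 2 / 64 + 9 * x ^ 4 / 64) /
        (√(1 - x ^ 2) * (1 + √(1 - x ^ 2) * (1 + x ^ 2 / 2 + 3 * x ^ 4 / 8)))) := by
  have hs : 0 < √(1 - x ^ 2) := sqrt_pos.mpr (by linarith)
  have hs2 : √(1 - x ^ 2) ^ 2 = 1 - x ^ 2 := sq_sqrt (by linarith)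
  have hq : 0 < 1 + √(1 - x ^ 2) * (1 + x ^ 2 / 2 + 3 * x ^ 4 / 8) := by positivity
  field_simp
  linear_combination (-16384 * (1 + x ^ 2 / 2 + 3 * x ^ 4 / 8) ^ 2) * hs2

theorem one_div_sqrt_one_sub_sq_sub_taylor_isBigO :
    (fun x : ℝ => 1 / √(1 - x ^ 2) - (1 + x ^ 2 / 2 + 3 * x ^ 4 / 8)) =O[𝓝 0] (· ^ 6) := by
  have hcont : ContinuousAt (fun x : ℝ => (5 / 8 + 15 * x ^ 2 / 64 + 9 * x ^ 4 / 64) /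
      (√(1 - x ^ 2) * (1 + √(1 - x ^ 2) * (1 + x ^ 2 / 2 + 3 * x ^ 4 / 8)))) 0 :=
    ContinuousAt.div (by fun_prop) (by fun_prop) (by norm_num)
  have hx : ∀ᶠ x : ℝ in 𝓝 0, x ^ 2 < 1 :=
    (continuous_pow 2).continuousAt.eventually_lt continuousAt_const (by norm_num)
  refine ((isBigO_refl (· ^ 6) _).mul (hcont.tendsto.isBigO_one ℝ)).congr' ?_ (by simp)
  filter_upwards [hx] with x hx using (one_div_sqrt_one_sub_sq_sub_taylor_eq hx).symm

theorem arcsin_sub_taylor_isBigO :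
    (fun x : ℝ => arcsin x - (x + x ^ 3 / 6 + 3 * x ^ 5 / 40)) =O[𝓝 0] (· ^ 7) := by
  refine isBigO_pow_succ_of_hasDerivAt (by simp) ?_ one_div_sqrt_one_sub_sq_sub_taylor_isBigO
  filter_upwards [Ioo_mem_nhds (by norm_num : (-1 : ℝ) < 0) one_pos] with x hx
  have hpoly : HasDerivAt (fun x : ℝ => x + x ^ 3 / 6 + 3 * x ^ 5 / 40)
      (1 + x ^ 2 / 2 + 3 * x ^ 4 / 8) x := by
    refine (((hasDerivAt_id x).add ((hasDerivAt_pow 3 x).div_const 6)).add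
      (((hasDerivAt_pow 5 x).const_mul 3).div_const 40)).congr_deriv ?_
    push_cast
    ring
  exact (hasDerivAt_arcsin hx.1.ne' hx.2.ne).sub hpoly

theorem arcsin_two_mul_sq_sub_one {x : ℝ} (hx₀ : 0 ≤ x) (hx₁ : x ≤ 1) :
    arcsin (2 * x ^ 2 - 1) = 2 * arcsin x - π / 2 := by
  have h₀ : 0 ≤ arcsin x := arcsin_nonneg.mpr hx₀
  have h₁ : arcsin x ≤ π / 2 := arcsin_le_pi_div_two x
  have hsin : sin (2 * arcsin x - π / 2) = 2 * x ^ 2 - 1 := by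
    rw [sin_sub_pi_div_two, cos_two_mul, cos_arcsin, sq_sqrt (by nlinarith)]
    ring
  rw [← hsin, arcsin_sin (by linarith) (by linarith)]

noncomputable def scaledOmegaShift (t : ℝ) : ℝ :=
  t * √(4 - t ^ 2) + 2 * (t ^ 2 - 2) * arcsin (t / 2)

theorem OmegaLSVK_sq_sub_two_add_eq {t : ℝ} (ht₀ : 0 ≤ t) (ht₂ : t ≤ 2) :
    OmegaLSVK (t ^ 2 - 2) + t ^ 2 - 2 = 2 / π * scaledOmegaShift t := by
  have hsqrt : √(4 - (t ^ 2 - 2) ^ 2) = t * √(4 - t ^ 2) := by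
    rw [show 4 - (t ^ 2 - 2) ^ 2 = t ^ 2 * (4 - t ^ 2) by ring, sqrt_mul (sq_nonneg t),
      sqrt_sq ht₀]
  have harcsin : arcsin ((t ^ 2 - 2) / 2) = 2 * arcsin (t / 2) - π / 2 := by
    rw [← arcsin_two_mul_sq_sub_one (by linarith) (by linarith)]
    ring_nf
  rw [OmegaLSVK, scaledOmegaShift, hsqrt, harcsin]
  field_simp
  ring

theorem hasDerivAt_scaledOmegaShift {t : ℝ} (ht : t ^ 2 < 4) :
    HasDerivAt scaledOmegaShift (4 * t * arcsin (t / 2)) t := by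
  have h4 : 0 < 4 - t ^ 2 := by linarith
  have hsqrt : HasDerivAt (fun t : ℝ => √(4 - t ^ 2)) (-(2 * t) / (2 * √(4 - t ^ 2))) t :=
    (by simpa using (hasDerivAt_pow 2 t).const_sub 4 : HasDerivAt (fun t : ℝ => 4 - t ^ 2) _ t).sqrt
      h4.ne'
  have harcsin : HasDerivAt (fun t : ℝ => arcsin (t / 2)) (1 / √(1 - (t / 2) ^ 2) * (1 / 2)) t :=
    (hasDerivAt_arcsin (by nlinarith) (by nlinarith)).comp t ((hasDerivAt_id t).div_const 2)
  have hpoly : HasDerivAt (fun t : ℝ => 2 * (t ^ 2 - 2)) (2 * (2 * t)) t := by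
    simpa using ((hasDerivAt_pow 2 t).sub_const 2).const_mul 2
  refine (((hasDerivAt_id t).mul hsqrt).add (hpoly.mul harcsin)).congr_deriv ?_
  have hs : √(1 - (t / 2) ^ 2) = √(4 - t ^ 2) / 2 := by
    rw [show 1 - (t / 2) ^ 2 = (4 - t ^ 2) / 2 ^ 2 by ring, sqrt_div' _ (by positivity),
      sqrt_sq zero_le_two]
  rw [hs, id]
  field_simp
  linear_combination sq_sqrt h4.le

theorem scaledOmegaShift_sub_taylor_isBigO :
    (fun t => scaledOmegaShift t - (2 * t ^ 3 / 3 + t ^ 5 / 60 + 3 * t ^ 7 / 2240))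
      =O[𝓝 0] (· ^ 9) := by
  have hderiv : ∀ᶠ t in 𝓝 (0 : ℝ),
      HasDerivAt (fun t => scaledOmegaShift t - (2 * t ^ 3 / 3 + t ^ 5 / 60 + 3 * t ^ 7 / 2240))
        (4 * t * (arcsin (t / 2) - (t / 2 + (t / 2) ^ 3 / 6 + 3 * (t / 2) ^ 5 / 40))) t := by
    filter_upwards [(continuous_pow 2).continuousAt.eventually_lt continuousAt_const
      (by norm_num : (0 : ℝ) ^ 2 < 4)] with t ht
    have hpoly : HasDerivAt (fun t : ℝ => 2 * t ^ 3 / 3 + t ^ 5 / 60 + 3 * t ^ 7 / 2240)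
        (2 * t ^ 2 + t ^ 4 / 12 + 3 * t ^ 6 / 320) t := by
      refine ((((hasDerivAt_pow 3 t).const_mul 2).div_const 3).add
        ((hasDerivAt_pow 5 t).div_const 60) |>.add
        (((hasDerivAt_pow 7 t).const_mul 3).div_const 2240)).congr_deriv ?_
      push_cast
      ring
    refine ((hasDerivAt_scaledOmegaShift ht).sub hpoly).congr_deriv ?_
    ring
  have hremainder : (fun t : ℝ =>
      arcsin (t / 2) - (t / 2 + (t / 2) ^ 3 / 6 + 3 * (t / 2) ^ 5 / 40)) =O[𝓝 0] (· ^ 7) := by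
    have hhalf : Tendsto (fun t : ℝ => t / 2) (𝓝 0) (𝓝 0) := by
      simpa using (continuous_id.div_const (2 : ℝ)).tendsto 0
    refine (arcsin_sub_taylor_isBigO.comp_tendsto hhalf).trans ?_
    simpa only [Function.comp_def, div_eq_inv_mul, mul_pow] using
      isBigO_const_mul_self ((2 : ℝ)⁻¹ ^ 7) (· ^ 7) (𝓝 0)
  refine isBigO_pow_succ_of_hasDerivAt (by simp [scaledOmegaShift]) hderiv ?_
  simpa only [← pow_succ'] using ((isBigO_refl (fun t : ℝ => t) _).const_mul_left 4).mul hremainder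

theorem OmegaLSVK_shift_taylor :
    (fun t => (OmegaLSVK (t ^ 2 - 2) + t ^ 2 - 2) -
        ((4 / (3 * π)) * t ^ 3 + (1 / (30 * π)) * t ^ 5 + (3 / (1120 * π)) * t ^ 7))
      =O[𝓝[Set.Ici (0 : ℝ)] 0] fun t => t ^ 9 := by
  refine ((scaledOmegaShift_sub_taylor_isBigO.const_mul_left (2 / π)).mono
    nhdsWithin_le_nhds).congr' ?_ EventuallyEq.rfl
  filter_upwards [Icc_mem_nhdsGE (by norm_num : (0 : ℝ) < 2)] with t ht
  rw [OmegaLSVK_sq_sub_two_add_eq ht.1 ht.2]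
  field_simp
  ring
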